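/- arXiv:1303.0247 — 4 statements merged into one kernel-verified Lean document; each statement's English description precedes it below -/
import Mathlib

section
/- Let n ≥ u ≥ 2 be integers and let m_1, …, m_k be positive integers with m_1 + ⋯ + m_k = C(n,u). Then the family K_n^u of all u-element subsets of an n-element set Ω can be partitioned into k pairwise disjoint sub-families H_1, …, H_k such that |H_i| = m_i for every i ∈ [k], and for every i ∈ [k] and every vertex ω ∈ Ω the number of sets in H_i containing ω lies between ⌊u·m_i/n⌋ and ⌈u·m_i/n⌉ (Baranyai's theorem). -/
/-!
Take a partition of the `u`-sets into parts `H i` of sizes `m i` minimising the energy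
`∑ i, ∑ ω, d_{H i}(ω)²`. Suppose some part `f` had `d_f(a) ≥ d_f(b) + 2`. Consider the digraph on
the parts with an edge `x → y` whenever some `E ∈ H x` with `a ∈ E`, `b ∉ E` has its image under
the transposition `(a b)` in `H y`. The transposition is a bijection between the sets containing
`a` but not `b` and those containing `b` but not `a`, so some part `g` reachable from `f` has
`d_g(a) < d_g(b)`. Exchanging every set on a simple path from `f` to `g` with its transpose keeps
the sizes of the parts, moves one unit of degree from `a` to `b` in `f` and from `b` to `a` in `g`,
and leaves every other degree unchanged; this lowers the energy. Hence in an energy-minimal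
partition the degrees within each part differ by at most one, and as they sum to `u * m i`, each
lies between the floor and the ceiling of `u * m i / n`.
-/

open Finset

theorem List.exists_isChain_cons_nodup_of_relationReflTransGen {α : Type*} {r : α → α → Prop}
    {a b : α} (h : Relation.ReflTransGen r a b) :
    ∃ l, IsChain r (a :: l) ∧ (a :: l).getLast (cons_ne_nil a l) = b ∧ (a :: l).Nodup := by
  induction h using Relation.ReflTransGen.head_induction_on with
  | refl => exact ⟨[], .singleton _, rfl, nodup_singleton _⟩
  | @head a c hac _ ih =>
    obtain ⟨l, hchain, hlast, hnodup⟩ := ih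
    by_cases ha : a ∈ c :: l
    · obtain ⟨s, t, hst⟩ := append_of_mem ha
      rw [hst] at hchain hnodup
      refine ⟨t, hchain.right_of_append, ?_, hnodup.of_append_right⟩
      simpa [hst] using hlast
    · exact ⟨c :: l, hchain.cons (by simpa using hac), by simpa using hlast,
        nodup_cons.2 ⟨ha, hnodup⟩⟩

theorem Finset.card_filter_add_card_filter_eq {α : Type*} {s : Finset α} {p q r t : α → Prop}
    [DecidablePred p] [DecidablePred q] [DecidablePred r] [DecidablePred t]
    (h : ∀ x ∈ s, ((if p x then 1 else 0) + if q x then 1 else 0) =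
      (if r x then 1 else 0) + if t x then 1 else 0) :
    #{x ∈ s | p x} + #{x ∈ s | q x} = #{x ∈ s | r x} + #{x ∈ s | t x} := by
  simp only [card_filter, ← sum_add_distrib]
  exact sum_congr rfl h

theorem Finset.sum_add_eq_sum_add_of_eq_off_pair {ι M : Type*} [Fintype ι] [DecidableEq ι]
    [AddCommMonoid M] {F G : ι → M} {i j : ι} (hij : i ≠ j)
    (h : ∀ l, l ≠ i → l ≠ j → F l = G l) : ∑ l, F l + (G i + G j) = ∑ l, G l + (F i + F j) := by
  rw [← sum_add_sum_compl {i, j} F, ← sum_add_sum_compl {i, j} G, sum_pair hij, sum_pair hij,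
    sum_congr rfl fun l hl => h l (by simp_all) (by simp_all)]
  abel

theorem floor_le_and_le_ceil_of_forall_le_add_one {ι K : Type*} [Fintype ι] [Field K]
    [LinearOrder K] [IsStrictOrderedRing K] [FloorRing K] {d : ι → ℕ}
    (hd : ∀ i j, d i ≤ d j + 1) (i : ι) :
    ⌊((∑ j, d j : ℕ) : K) / Fintype.card ι⌋ ≤ d i ∧
      (d i : ℤ) ≤ ⌈((∑ j, d j : ℕ) : K) / Fintype.card ι⌉ := by
  have hcard : (0 : K) < Fintype.card ι := by
    have : Nonempty ι := ⟨i⟩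
    exact_mod_cast Fintype.card_pos
  have hlt : ∑ j, d j < Fintype.card ι * (d i + 1) := by
    calc ∑ j, d j < ∑ _j : ι, (d i + 1) :=
          sum_lt_sum (fun j _ => hd j i) ⟨i, mem_univ i, Nat.lt_succ_self _⟩
      _ = _ := by simp
  have hgt : Fintype.card ι * d i < ∑ j, d j + Fintype.card ι := by
    calc Fintype.card ι * d i = ∑ _j : ι, d i := by simp
      _ < ∑ j, (d j + 1) := sum_lt_sum (fun j _ => hd i j) ⟨i, mem_univ i, Nat.lt_succ_self _⟩
      _ = _ := by simp [sum_add_distrib]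
  constructor
  · rw [Int.floor_le_iff, div_lt_iff₀ hcard]
    exact_mod_cast (by linarith : (∑ j, d j : ℤ) < (d i + 1) * Fintype.card ι)
  · rw [Int.le_ceil_iff, lt_div_iff₀ hcard]
    have : ((d i : ℤ) - 1) * Fintype.card ι < ∑ j, d j := by
      zify at hgt
      push_cast
      linarith
    exact_mod_cast this

namespace Baranyai

section Partition

variable {α : Type*} [DecidableEq α] {k : ℕ}

structure IsPartition (s : Finset α) (m : Fin k → ℕ) (H : Fin k → Finset α) : Prop where
  disjoint : ∀ i j, i ≠ j → Disjoint (H i) (H j)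
  biUnion_eq : univ.biUnion H = s
  card_eq : ∀ i, #(H i) = m i

variable {s : Finset α} {m : Fin k → ℕ} {H : Fin k → Finset α}

theorem IsPartition.exists (hm : ∑ i, m i = #s) : ∃ H, IsPartition s m H := by
  let e : (Σ i, Fin (m i)) ≃ s := Fintype.equivOfCardEq (by simp [hm])
  have he : ∀ {i i' j j'}, (e ⟨i, j⟩ : α) = e ⟨i', j'⟩ → (⟨i, j⟩ : Σ i, Fin (m i)) = ⟨i', j'⟩ :=
    fun h => e.injective (Subtype.ext h)
  refine ⟨fun i => univ.map ⟨fun j => e ⟨i, j⟩, fun j j' h => ?_⟩, ⟨fun i i' hii' => ?_, ?_, ?_⟩⟩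
  · simpa using he h
  · simp only [disjoint_left, mem_map, mem_univ, true_and]
    rintro _ ⟨j, rfl⟩ ⟨j', h⟩
    exact hii' (congrArg Sigma.fst (he h.symm))
  · ext x
    simp only [mem_biUnion, mem_map, mem_univ, true_and]
    exact ⟨fun ⟨i, j, h⟩ => h ▸ (e ⟨i, j⟩).2,
      fun hx => ⟨_, _, congrArg Subtype.val (e.apply_symm_apply ⟨x, hx⟩)⟩⟩
  · simp

theorem IsPartition.mem_of_mem (hH : IsPartition s m H) {i : Fin k} {x : α} (hx : x ∈ H i) :
    x ∈ s :=
  hH.biUnion_eq ▸ mem_biUnion.2 ⟨i, mem_univ i, hx⟩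

theorem IsPartition.exists_mem (hH : IsPartition s m H) {x : α} (hx : x ∈ s) : ∃ i, x ∈ H i := by
  rw [← hH.biUnion_eq] at hx
  simpa using hx

theorem IsPartition.eq_of_mem_of_mem (hH : IsPartition s m H) {i j : Fin k} {x : α}
    (hi : x ∈ H i) (hj : x ∈ H j) : i = j := by
  by_contra hij
  exact disjoint_left.1 (hH.disjoint i j hij) hi hj

theorem IsPartition.map (hH : IsPartition s m H) (e : Equiv.Perm α) (he : ∀ x ∈ s, e x ∈ s) :
    IsPartition s m fun i => (H i).map e.toEmbedding := by
  have hs : s.map e.toEmbedding = s := map_eq_of_subset fun _ hx => by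
    obtain ⟨y, hy, rfl⟩ := mem_map.1 hx
    exact he y hy
  refine ⟨fun i j hij => (disjoint_map _).2 (hH.disjoint i j hij), ?_,
    fun i => by simp [hH.card_eq]⟩
  conv_rhs => rw [← hs, ← hH.biUnion_eq]
  ext x
  simp [mem_map_equiv]

theorem IsPartition.card_inter_insert (hH : IsPartition s m H) {x : Fin k} {e : α} {t : Finset α}
    (hx : e ∈ H x) (he : e ∉ t) (z : Fin k) :
    #(H z ∩ insert e t) = #(H z ∩ t) + if z = x then 1 else 0 := by
  split_ifs with hz
  · subst hz
    rw [inter_insert_of_mem hx, card_insert_of_notMem (fun h => he (mem_inter.1 h).2)]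
  · rw [inter_insert_of_notMem (fun h => hz (hH.eq_of_mem_of_mem h hx)), add_zero]

end Partition

variable {Ω : Type*} [DecidableEq Ω]

def degree (s : Finset (Finset Ω)) (ω : Ω) : ℕ := #{E ∈ s | ω ∈ E}

theorem sum_degree [Fintype Ω] (s : Finset (Finset Ω)) : ∑ ω, degree s ω = ∑ E ∈ s, #E := by
  simp only [degree, card_eq_sum_ones, sum_filter]
  rw [sum_comm]
  simp

def transpose (a b : Ω) : Equiv.Perm (Finset Ω) := (Equiv.swap a b).finsetCongr

variable {a b : Ω}

@[simp]
theorem mem_transpose {E : Finset Ω} {ω : Ω} : ω ∈ transpose a b E ↔ Equiv.swap a b ω ∈ E := by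
  simp [transpose, mem_map_equiv]

@[simp]
theorem card_transpose (E : Finset Ω) : #(transpose a b E) = #E := by
  simp [transpose]

theorem transpose_transpose (E : Finset Ω) : transpose a b (transpose a b E) = E := by
  ext; simp

@[simp]
theorem transpose_symm : (transpose a b).symm = transpose a b :=
  Equiv.ext fun E => (Equiv.symm_apply_eq _).2 (transpose_transpose E).symm

theorem degree_add_card_filter (s : Finset (Finset Ω)) (a b : Ω) :
    degree s a + #{E ∈ s | b ∈ E ∧ a ∉ E} = degree s b + #{E ∈ s | a ∈ E ∧ b ∉ E} :=
  card_filter_add_card_filter_eq fun E _ => by by_cases a ∈ E <;> by_cases b ∈ E <;> simp [*]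

def exchange (a b : Ω) (S : Finset (Finset Ω)) : Equiv.Perm (Finset Ω) :=
  Function.Involutive.toPerm (fun E => if E ∈ S ∨ transpose a b E ∈ S then transpose a b E else E)
    fun E => by by_cases h : E ∈ S ∨ transpose a b E ∈ S <;> simp [h, transpose_transpose, or_comm]

theorem exchange_apply (S : Finset (Finset Ω)) (E : Finset Ω) :
    exchange a b S E = if E ∈ S ∨ transpose a b E ∈ S then transpose a b E else E :=
  rfl

theorem exchange_apply_mem {P S : Finset (Finset Ω)} (hP : ∀ E ∈ P, transpose a b E ∈ P)
    {E : Finset Ω} (hE : E ∈ P) : exchange a b S E ∈ P := by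
  rw [exchange_apply]
  split_ifs
  exacts [hP E hE, hE]

theorem degree_map (s : Finset (Finset Ω)) (e : Equiv.Perm (Finset Ω)) (ω : Ω) :
    degree (s.map e.toEmbedding) ω = #{E ∈ s | ω ∈ e E} := by
  simp [degree, filter_map]

theorem degree_map_exchange {S : Finset (Finset Ω)} (s : Finset (Finset Ω)) {ω : Ω}
    (ha : ω ≠ a) (hb : ω ≠ b) : degree (s.map (exchange a b S).toEmbedding) ω = degree s ω := by
  rw [degree_map, degree]
  congr 1
  refine filter_congr fun E _ => ?_
  rw [exchange_apply]
  split_ifs <;> simp [Equiv.swap_apply_of_ne_of_ne ha hb]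

theorem degree_map_exchange_left {S : Finset (Finset Ω)} (hS : ∀ E ∈ S, a ∈ E ∧ b ∉ E)
    (s : Finset (Finset Ω)) :
    degree (s.map (exchange a b S).toEmbedding) a + #(s ∩ S) =
      degree s a + #(s ∩ S.map (transpose a b).toEmbedding) := by
  rw [degree_map, degree, ← filter_mem_eq_inter, ← filter_mem_eq_inter]
  refine card_filter_add_card_filter_eq fun E _ => ?_
  have hE := hS E
  have hE' : transpose a b E ∈ S → b ∈ E ∧ a ∉ E := by simpa using hS (transpose a b E)
  rw [exchange_apply]
  by_cases E ∈ S <;> by_cases transpose a b E ∈ S <;> simp_all [mem_map_equiv]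

theorem degree_map_exchange_right {S : Finset (Finset Ω)} (hS : ∀ E ∈ S, a ∈ E ∧ b ∉ E)
    (s : Finset (Finset Ω)) :
    degree (s.map (exchange a b S).toEmbedding) b + #(s ∩ S.map (transpose a b).toEmbedding) =
      degree s b + #(s ∩ S) := by
  rw [degree_map, degree, ← filter_mem_eq_inter, ← filter_mem_eq_inter]
  refine card_filter_add_card_filter_eq fun E _ => ?_
  have hE := hS E
  have hE' : transpose a b E ∈ S → b ∈ E ∧ a ∉ E := by simpa using hS (transpose a b E)
  rw [exchange_apply]
  by_cases E ∈ S <;> by_cases transpose a b E ∈ S <;> simp_all [mem_map_equiv]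

variable {k : ℕ} {P : Finset (Finset Ω)} {m : Fin k → ℕ} {H : Fin k → Finset (Finset Ω)}

def Transfers (H : Fin k → Finset (Finset Ω)) (a b : Ω) (x y : Fin k) : Prop :=
  ∃ E ∈ H x, a ∈ E ∧ b ∉ E ∧ transpose a b E ∈ H y

/-- `S` consists of one witness set per edge of the path; as the path visits distinct parts, the
witnesses lie in distinct parts, which is what the support condition records. -/
theorem IsPartition.exists_flow_of_isChain (hH : IsPartition P m H) (x : Fin k) (l : List (Fin k))
    (hchain : (x :: l).IsChain (Transfers H a b)) (hnodup : (x :: l).Nodup) :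
    ∃ S : Finset (Finset Ω), (∀ E ∈ S, a ∈ E ∧ b ∉ E) ∧ S ⊆ (x :: l).toFinset.biUnion H ∧
      ∀ z, #(H z ∩ S) + (if z = (x :: l).getLast (List.cons_ne_nil x l) then 1 else 0) =
        #(H z ∩ S.map (transpose a b).toEmbedding) + if z = x then 1 else 0 := by
  induction l generalizing x with
  | nil =>
    refine ⟨∅, by simp, by simp, fun z => ?_⟩
    simp only [inter_empty, card_empty, List.getLast_singleton, zero_add, map_empty]
    congr
  | cons y l ih =>
    rw [List.isChain_cons_cons] at hchain
    rw [List.nodup_cons] at hnodup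
    obtain ⟨⟨E, hEx, haE, hbE, hEy⟩, hchain⟩ := hchain
    obtain ⟨S, hS, hSsub, hflow⟩ := ih y hchain hnodup.2
    have hES : E ∉ S := fun hE => by
      obtain ⟨w, hw, hEw⟩ := mem_biUnion.1 (hSsub hE)
      exact hnodup.1 (hH.eq_of_mem_of_mem hEx hEw ▸ List.mem_toFinset.1 hw)
    refine ⟨insert E S, ?_, ?_, fun z => ?_⟩
    · simpa [haE, hbE] using hS
    · refine insert_subset (mem_biUnion.2 ⟨x, by simp, hEx⟩) (hSsub.trans ?_)
      exact biUnion_subset_biUnion_of_subset_left _ (by simp [List.toFinset_cons])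
    · have h1 := hH.card_inter_insert hEx hES z
      have h2 := hH.card_inter_insert (t := S.map (transpose a b).toEmbedding) hEy
        (by simpa using hES) z
      rw [map_insert, Equiv.coe_toEmbedding, h1, h2, List.getLast_cons_cons]
      have := hflow z
      omega

theorem IsPartition.exists_reachable_degree_lt (hH : IsPartition P m H)
    (hP : ∀ E ∈ P, transpose a b E ∈ P) {f : Fin k} (hf : degree (H f) b < degree (H f) a) :
    ∃ g, Relation.ReflTransGen (Transfers H a b) f g ∧ degree (H g) a < degree (H g) b := by
  classical
  by_contra! hcon
  let R : Finset (Fin k) := {x | Relation.ReflTransGen (Transfers H a b) f x}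
  let A x := {E ∈ H x | a ∈ E ∧ b ∉ E}
  let B x := {E ∈ H x | b ∈ E ∧ a ∉ E}
  have hAB : ∑ x ∈ R, #(A x) ≤ ∑ x ∈ R, #(B x) := by
    rw [← card_biUnion fun x _ y _ hxy => disjoint_filter_filter (hH.disjoint x y hxy),
      ← card_biUnion fun x _ y _ hxy => disjoint_filter_filter (hH.disjoint x y hxy)]
    refine card_le_card_of_injOn (transpose a b) (fun E hE => ?_) (transpose a b).injective.injOn
    simp only [R, mem_coe, mem_biUnion, mem_filter, mem_univ, true_and] at hE
    obtain ⟨x, hfx, hEx, haE, hbE⟩ := hE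
    obtain ⟨y, hy⟩ := hH.exists_mem (hP E (hH.mem_of_mem hEx))
    simp only [R, mem_coe, mem_biUnion, mem_filter, mem_univ, true_and]
    exact ⟨y, hfx.tail ⟨E, hEx, haE, hbE, hy⟩, hy, by simpa using haE, by simpa using hbE⟩
  have hbridge : ∀ x, degree (H x) a + #(B x) = degree (H x) b + #(A x) :=
    fun x => degree_add_card_filter (H x) a b
  have hBA : ∑ x ∈ R, #(B x) < ∑ x ∈ R, #(A x) := by
    refine sum_lt_sum (fun x hx => ?_) ⟨f, by simpa [R] using .refl, ?_⟩
    · have := hbridge x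
      have := hcon x (by simpa [R] using hx)
      omega
    · have := hbridge f
      omega
  omega

section Energy

variable [Fintype Ω]

def energy (H : Fin k → Finset (Finset Ω)) : ℕ := ∑ i, ∑ ω, degree (H i) ω ^ 2

theorem energy_lt_energy {H' : Fin k → Finset (Finset Ω)} {f g : Fin k} (hab : a ≠ b)
    (ha : ∀ z, degree (H' z) a + (if z = f then 1 else 0) = degree (H z) a + if z = g then 1 else 0)
    (hb : ∀ z, degree (H' z) b + (if z = g then 1 else 0) = degree (H z) b + if z = f then 1 else 0)
    (hrest : ∀ z ω, ω ≠ a → ω ≠ b → degree (H' z) ω = degree (H z) ω)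
    (hf : degree (H f) b + 2 ≤ degree (H f) a) (hg : degree (H g) a < degree (H g) b) :
    energy H' < energy H := by
  have hfg : f ≠ g := by rintro rfl; omega
  have hpair z := sum_add_eq_sum_add_of_eq_off_pair (F := fun ω => degree (H' z) ω ^ 2)
    (G := fun ω => degree (H z) ω ^ 2) hab fun ω h₁ h₂ => by rw [hrest z ω h₁ h₂]
  have hlt :
      degree (H' f) a ^ 2 + degree (H' f) b ^ 2 < degree (H f) a ^ 2 + degree (H f) b ^ 2 := by
    have ha := ha f
    have hb := hb f
    simp only [hfg, if_true, if_false] at ha hb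
    nlinarith
  have hle z :
      degree (H' z) a ^ 2 + degree (H' z) b ^ 2 ≤ degree (H z) a ^ 2 + degree (H z) b ^ 2 := by
    by_cases hzf : z = f
    · exact hzf ▸ hlt.le
    have ha := ha z
    have hb := hb z
    by_cases hzg : z = g
    · subst hzg
      simp only [hzf, if_true, if_false] at ha hb
      nlinarith
    simp only [hzf, hzg, if_false, add_zero] at ha hb
    rw [ha, hb]
  refine sum_lt_sum (fun z _ => ?_) ⟨f, mem_univ f, ?_⟩
  · have := hpair z
    have := hle z
    omega
  · have := hpair f
    omega

theorem IsPartition.degree_le_degree_add_one (hH : IsPartition P m H)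
    (hP : ∀ a b : Ω, ∀ E ∈ P, transpose a b E ∈ P)
    (hmin : ∀ H', IsPartition P m H' → energy H ≤ energy H') (i : Fin k) (a b : Ω) :
    degree (H i) a ≤ degree (H i) b + 1 := by
  by_contra! hi
  have hab : a ≠ b := by rintro rfl; omega
  obtain ⟨g, hreach, hg⟩ := hH.exists_reachable_degree_lt (hP a b) (f := i) (hf := by omega)
  obtain ⟨l, hchain, hlast, hnodup⟩ :=
    List.exists_isChain_cons_nodup_of_relationReflTransGen hreach
  obtain ⟨S, hS, -, hflow⟩ := hH.exists_flow_of_isChain i l hchain hnodup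
  rw [hlast] at hflow
  have hH' := hH.map (exchange a b S) fun E hE => exchange_apply_mem (hP a b) hE
  refine (hmin _ hH').not_gt (energy_lt_energy (f := i) (g := g) hab (fun z => ?_) (fun z => ?_)
    (fun z ω => degree_map_exchange (H z)) (by omega) hg)
  · have := degree_map_exchange_left hS (H z)
    have := hflow z
    omega
  · have := degree_map_exchange_right hS (H z)
    have := hflow z
    omega

theorem exists_isPartition_degree_le_degree_add_one
    (hP : ∀ a b : Ω, ∀ E ∈ P, transpose a b E ∈ P) (hm : ∑ i, m i = #P) :
    ∃ H : Fin k → Finset (Finset Ω), IsPartition P m H ∧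
      ∀ i a b, degree (H i) a ≤ degree (H i) b + 1 := by
  obtain ⟨H₀, hH₀⟩ := IsPartition.exists hm
  obtain ⟨H, hH, hmin⟩ := (measure energy).wf.has_min {H | IsPartition P m H} ⟨H₀, hH₀⟩
  exact ⟨H, hH, hH.degree_le_degree_add_one hP fun H' hH' => not_lt.1 (hmin H' hH')⟩

end Energy

end Baranyai

theorem baranyai_general (Ω : Type*) [Fintype Ω] [DecidableEq Ω] (n u k : ℕ)
    (hΩ : Fintype.card Ω = n)
    (m : Fin k → ℕ) (hsum : ∑ i, m i = n.choose u) :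
    ∃ H : Fin k → Finset (Finset Ω),
      (∀ i j, i ≠ j → Disjoint (H i) (H j)) ∧
      (Finset.univ.biUnion H = Finset.powersetCard u (Finset.univ : Finset Ω)) ∧
      (∀ i, (H i).card = m i) ∧
      (∀ i : Fin k, ∀ ω : Ω,
        ⌊(u * m i : ℚ) / (n : ℚ)⌋ ≤ (((H i).filter (fun E => ω ∈ E)).card : ℤ) ∧
        (((H i).filter (fun E => ω ∈ E)).card : ℤ) ≤ ⌈(u * m i : ℚ) / (n : ℚ)⌉) := by
  obtain ⟨H, hH, hbalanced⟩ := Baranyai.exists_isPartition_degree_le_degree_add_one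
    (P := powersetCard u (univ : Finset Ω)) (m := m) (by simp) (by simp [hsum, hΩ])
  refine ⟨H, hH.disjoint, hH.biUnion_eq, hH.card_eq, fun i ω => ?_⟩
  have hsum_degree : ∑ ω, Baranyai.degree (H i) ω = u * m i := by
    rw [Baranyai.sum_degree, ← hH.card_eq i,
      sum_const_nat fun E hE => (mem_powersetCard.1 (hH.mem_of_mem hE)).2, mul_comm]
  have := floor_le_and_le_ceil_of_forall_le_add_one (K := ℚ) (hbalanced i) ω
  rw [hsum_degree, hΩ] at this
  exact_mod_cast this

/-- **Baranyai's theorem.** Let `n ≥ u ≥ 2` and let `m₁, …, m_k` be positive integers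
with `m₁ + ⋯ + m_k = C(n,u)`. Then the family of all `u`-element subsets of an
`n`-element set `Ω` can be partitioned into `k` pairwise disjoint sub-families
`H₁, …, H_k` with `|Hᵢ| = mᵢ`, such that for every `i` and every vertex `ω ∈ Ω`
the degree `d_{Hᵢ}(ω)` lies between `⌊u·mᵢ/n⌋` and `⌈u·mᵢ/n⌉`. -/
theorem baranyai (Ω : Type*) [Fintype Ω] [DecidableEq Ω] (n u k : ℕ)
    (hΩ : Fintype.card Ω = n) (hun : u ≤ n) (hu : 2 ≤ u)
    (m : Fin k → ℕ) (hm : ∀ i, 0 < m i) (hsum : ∑ i, m i = n.choose u) :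
    ∃ H : Fin k → Finset (Finset Ω),
      (∀ i j, i ≠ j → Disjoint (H i) (H j)) ∧
      (Finset.univ.biUnion H = Finset.powersetCard u (Finset.univ : Finset Ω)) ∧
      (∀ i, (H i).card = m i) ∧
      (∀ i : Fin k, ∀ ω : Ω,
        ⌊(u * m i : ℚ) / (n : ℚ)⌋ ≤ (((H i).filter (fun E => ω ∈ E)).card : ℤ) ∧
        (((H i).filter (fun E => ω ∈ E)).card : ℤ) ≤ ⌈(u * m i : ℚ) / (n : ℚ)⌉) :=
  baranyai_general Ω n u k hΩ m hsum
end

section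
/- Let ρ > 1 be an odd integer, let u be a positive integer, and set n = ρu + 1. Fix an n-element set Ω and an element ω_i ∈ Ω. Then the family of all u-element subsets of Ω ∖ {ω_i} can be partitioned into k = C(n−2, u−1) pairwise disjoint classes T_{i1}, …, T_{ik}, each consisting of exactly ρ = (n−1)/u subsets, such that each class T_{ij} is a partition of Ω ∖ {ω_i}, and consequently for every j ∈ [k] the sum over 𝔽₂ of the vectors { χ_{Ω∖S} : S ∈ T_{ij} } in 𝔽₂^Ω equals the unit vector e_{ω_i}. -/
/-! Baranyai's argument. Put `m = ρu`, `k = C(m-1, u-1)`, and place the `m` points of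
`Ω ∖ {ωᵢ}` one at a time, maintaining `k` ordered partitions of the `l` points placed so
far into `ρ` possibly empty blocks such that every set `S` of placed points occurs as a block
exactly `C(m - l, u - |S|)` times. To place a new point, every partition picks one block of size
`< u` to receive it, each `S` being picked exactly `C(m-l-1, u-1-|S|)` times. Such a choice exists
by Hall's theorem with capacities: each partition has total deficiency `∑ (u - |block|) = m - l`,
so a set `W` of partitions meets blocks of total capacity at least `|W|`, and the capacities sum
to `k` by Vandermonde's identity. Once all points are placed, every `u`-subset is a block exactly
once. The parity claim holds because each class has the odd number `ρ` of blocks and every point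
other than `ωᵢ` lies in exactly one of them. -/

open Finset Function

theorem Nat.choose_pred_mul_eq (ρ u : ℕ) (hu : 0 < u) :
    (ρ * u - 1).choose (u - 1) * ρ = (ρ * u).choose u := by
  rcases Nat.eq_zero_or_pos ρ with rfl | hρ
  · simp [Nat.choose_eq_zero_of_lt hu]
  have h := Nat.add_one_mul_choose_eq (ρ * u - 1) (u - 1)
  rw [Nat.sub_add_cancel (Nat.mul_pos hρ hu), Nat.sub_add_cancel hu] at h
  refine Nat.eq_of_mul_eq_mul_right hu ?_
  rw [← h]
  ring

theorem Nat.choose_sub_eq_add {N s u : ℕ} (hN : 0 < N) (hs : s ≤ u) :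
    N.choose (u - s) =
      (if s < u then (N - 1).choose (u - 1 - s) else 0) + (N - 1).choose (u - s) := by
  split_ifs with h
  · obtain ⟨r, hr⟩ : ∃ r, u - s = r + 1 := ⟨u - 1 - s, by omega⟩
    obtain ⟨M, rfl⟩ : ∃ M, N = M + 1 := ⟨N - 1, by omega⟩
    rw [hr, show u - 1 - s = r by omega, Nat.choose_succ_succ', Nat.add_sub_cancel]
  · simp [show u - s = 0 by omega]

theorem Nat.choose_sub_mul_sub_eq {N s u : ℕ} (hN : 0 < N) (hs : s ≤ u) :
    N.choose (u - s) * (u - s) = (if s < u then (N - 1).choose (u - 1 - s) else 0) * N := by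
  split_ifs with h
  · have := Nat.add_one_mul_choose_eq (N - 1) (u - 1 - s)
    rw [Nat.sub_add_cancel hN, show u - 1 - s + 1 = u - s by omega] at this
    rw [← this, mul_comm]
  · simp [show u - s = 0 by omega]

theorem Finset.sum_powerset_choose_sub {α : Type*} (V : Finset α) (a w : ℕ) :
    ∑ S ∈ V.powerset with #S ≤ w, a.choose (w - #S) = (#V + a).choose w := by
  set g : ℕ → ℕ := fun k => (#V).choose k * if k ≤ w then a.choose (w - k) else 0
  have hg (n : ℕ) (hn : n = #V + 1 ∨ n = w + 1) :
      ∑ k ∈ range n, g k = ∑ k ∈ range (#V + w + 1), g k := by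
    refine sum_subset (range_subset_range.2 (by omega)) fun k _ hk => ?_
    rcases le_or_gt k w with hkw | hkw
    · simp [g, Nat.choose_eq_zero_of_lt (show #V < k by simp at hk; omega)]
    · simp [g, hkw.not_ge]
  rw [sum_filter, sum_powerset_apply_card (fun s => if s ≤ w then a.choose (w - s) else 0),
    Nat.add_choose_eq, Nat.sum_antidiagonal_eq_sum_range_succ_mk]
  refine (hg _ (by omega)).trans ((hg _ (by omega)).symm.trans (sum_congr rfl fun k hk => ?_))
  simp [g, show k ≤ w by simpa [Nat.lt_succ_iff] using hk]

theorem Finset.exists_eq_card_fiber_of_sum_eq_card {ι β : Type*} [Fintype ι] [DecidableEq β]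
    (N : ι → Finset β) (B : Finset β) (q : β → ℕ) (hNB : ∀ j, N j ⊆ B)
    (hq : ∑ b ∈ B, q b = Fintype.card ι)
    (hall : ∀ W : Finset ι, #W ≤ ∑ b ∈ W.biUnion N, q b) :
    ∃ g : ι → β, (∀ j, g j ∈ N j) ∧ ∀ b ∈ B, #{j | g j = b} = q b := by
  obtain ⟨f, hf_inj, hf⟩ := (all_card_le_biUnion_card_iff_exists_injective
    fun j => (N j).sigma fun b => range (q b)).mp fun W => by
      refine (hall W).trans ?_
      simpa using card_le_card (s := (W.biUnion N).sigma fun b => range (q b)) (by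
        intro x hx
        simp only [mem_sigma, mem_biUnion] at hx ⊢
        grind)
  have hf_le (b : β) : #{j | (f j).1 = b} ≤ q b := by
    simpa using card_le_card_of_injOn (fun j => (f j).2) (t := range (q b))
      (fun j hj => by have := (mem_sigma.mp (hf j)).2; simp_all)
      (fun j hj j' hj' h => hf_inj <|
        Sigma.ext ((mem_filter.mp hj).2.trans (mem_filter.mp hj').2.symm) (heq_of_eq h))
  have hsum : ∑ b ∈ B, #{j | (f j).1 = b} = Fintype.card ι :=
    (card_eq_sum_card_fiberwise fun j _ => hNB j (mem_sigma.mp (hf j)).1).symm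
  exact ⟨fun j => (f j).1, fun j => (mem_sigma.mp (hf j)).1,
    (sum_eq_sum_iff_of_le fun b _ => hf_le b).mp (hsum.trans hq.symm)⟩

section

variable {α ι κ : Type*} [DecidableEq α] [Fintype ι] [Fintype κ]

theorem Finset.card_filter_snd_eq_and [DecidableEq κ] (σ : ι → κ) (P : ι → Prop)
    [DecidablePred P] :
    #{p : ι × κ | p.2 = σ p.1 ∧ P p.1} = #{j | P j} :=
  card_nbij' Prod.fst (fun j => (j, σ j)) (fun p hp => by simp_all)
    (fun j hj => by simp_all) (fun p hp => by simp_all [Prod.ext_iff]) (fun j _ => rfl)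

/-- `A j t` is the `t`-th block of the `j`-th ordered partition of `V`; `m` is the number of points
there will be once all of them are placed. -/
structure IsBaranyaiFamily (u m : ℕ) (V : Finset α) (A : ι → κ → Finset α) : Prop where
  biUnion_eq (j : ι) : univ.biUnion (A j) = V
  pairwise_disjoint (j : ι) : Pairwise (Disjoint on A j)
  card_filter_eq (S : Finset α) (hS : S ⊆ V) :
    #{p : ι × κ | A p.1 p.2 = S} = if #S ≤ u then (m - #V).choose (u - #S) else 0

theorem isBaranyaiFamily_empty {u m : ℕ} (h : Fintype.card ι * Fintype.card κ = m.choose u) :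
    IsBaranyaiFamily u m ∅ fun (_ : ι) (_ : κ) => (∅ : Finset α) where
  biUnion_eq _ := by ext; simp
  pairwise_disjoint _ _ _ _ := disjoint_bot_left
  card_filter_eq S hS := by
    obtain rfl := subset_empty.mp hS
    simp [h]

namespace IsBaranyaiFamily

variable {u m : ℕ} {V : Finset α} {A : ι → κ → Finset α}

theorem subset (hA : IsBaranyaiFamily u m V A) (j : ι) (t : κ) : A j t ⊆ V :=
  hA.biUnion_eq j ▸ subset_biUnion_of_mem _ (mem_univ t)

theorem card_le (hA : IsBaranyaiFamily u m V A) (j : ι) (t : κ) : #(A j t) ≤ u := by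
  by_contra h
  have hpos : 0 < #{p : ι × κ | A p.1 p.2 = A j t} := card_pos.mpr ⟨(j, t), by simp⟩
  rw [hA.card_filter_eq _ (hA.subset j t), if_neg h] at hpos
  exact hpos.false

theorem sum_card (hA : IsBaranyaiFamily u m V A) (j : ι) : ∑ t, #(A j t) = #V := by
  rw [← card_biUnion ((hA.pairwise_disjoint j).set_pairwise _), hA.biUnion_eq]

theorem sum_sub_card (hA : IsBaranyaiFamily u m V A) (hm : Fintype.card κ * u = m) (j : ι) :
    ∑ t, (u - #(A j t)) = m - #V := by
  have h : ∑ t, (u - #(A j t) + #(A j t)) = m := by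
    simp [Nat.sub_add_cancel (hA.card_le j _), ← hm]
  rw [sum_add_distrib, hA.sum_card] at h
  omega

theorem card_le_sum_choose (hA : IsBaranyaiFamily u m V A) (hm : Fintype.card κ * u = m)
    (hV : #V < m) (W : Finset ι) :
    #W ≤ ∑ S ∈ W.biUnion fun j => {S ∈ univ.image (A j) | #S < u},
      (m - #V - 1).choose (u - 1 - #S) := by
  have hN : 0 < m - #V := by omega
  refine Nat.le_of_mul_le_mul_right ?_ hN
  calc #W * (m - #V) = ∑ p ∈ W ×ˢ univ, (u - #(A p.1 p.2)) := by
        rw [sum_product, sum_congr rfl fun j _ => hA.sum_sub_card hm j, sum_const, smul_eq_mul]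
    _ = ∑ S ∈ (W ×ˢ univ).image (fun p => A p.1 p.2),
          #{p ∈ W ×ˢ univ | A p.1 p.2 = S} * (u - #S) := sum_comp (fun S => u - #S) _
    _ ≤ ∑ S ∈ (W ×ˢ univ).image (fun p => A p.1 p.2),
          (if #S < u then (m - #V - 1).choose (u - 1 - #S) else 0) * (m - #V) := by
        refine sum_le_sum fun S hS => ?_
        obtain ⟨⟨j, t⟩, -, rfl⟩ := mem_image.mp hS
        have hcount := hA.card_filter_eq _ (hA.subset j t)
        rw [if_pos (hA.card_le j t)] at hcount
        rw [← Nat.choose_sub_mul_sub_eq hN (hA.card_le j t), ← hcount]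
        exact Nat.mul_le_mul_right _ (card_le_card (filter_subset_filter _ (subset_univ _)))
    _ = _ := by
        rw [← sum_mul, ← sum_filter]
        congr 2
        ext S
        simp only [mem_filter, mem_biUnion, mem_image, mem_product, mem_univ, and_true,
          Prod.exists]
        aesop

theorem exists_block_choice (hA : IsBaranyaiFamily u m V A) (hu : 0 < u)
    (hm : Fintype.card κ * u = m) (hι : Fintype.card ι = (m - 1).choose (u - 1)) (hV : #V < m) :
    ∃ σ : ι → κ, ∀ S ⊆ V,
      #{j | A j (σ j) = S} = if #S < u then (m - #V - 1).choose (u - 1 - #S) else 0 := by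
  have hq :
      ∑ S ∈ V.powerset with #S < u, (m - #V - 1).choose (u - 1 - #S) = Fintype.card ι := by
    rw [hι, ← show #V + (m - #V - 1) = m - 1 by omega, ← sum_powerset_choose_sub]
    exact sum_congr (filter_congr fun S _ => by omega) fun _ _ => rfl
  obtain ⟨g, hgN, hgq⟩ := exists_eq_card_fiber_of_sum_eq_card _ _ _
    (fun j S hS => by
      obtain ⟨hS, hSu⟩ := mem_filter.mp hS
      obtain ⟨t, -, rfl⟩ := mem_image.mp hS
      exact mem_filter.mpr ⟨mem_powerset.mpr (hA.subset j t), hSu⟩)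
    hq (hA.card_le_sum_choose hm hV)
  choose σ hσ using fun j => mem_image.mp (mem_filter.mp (hgN j)).1
  refine ⟨σ, fun S hS => ?_⟩
  simp only [fun j => (hσ j).2]
  split_ifs with hSu
  · exact hgq S (mem_filter.mpr ⟨mem_powerset.mpr hS, hSu⟩)
  · refine card_eq_zero.mpr (filter_eq_empty_iff.mpr fun j _ hj => hSu ?_)
    exact hj ▸ (mem_filter.mp (hgN j)).2

theorem card_eq_of_card_eq (hA : IsBaranyaiFamily u m V A) (hV : #V = m) (j : ι) (t : κ) :
    #(A j t) = u := by
  have hpos : 0 < #{p : ι × κ | A p.1 p.2 = A j t} := card_pos.mpr ⟨(j, t), by simp⟩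
  rw [hA.card_filter_eq _ (hA.subset j t), if_pos (hA.card_le j t), hV, Nat.sub_self] at hpos
  have := hA.card_le j t
  by_contra h
  rw [Nat.choose_eq_zero_of_lt (by omega)] at hpos
  exact hpos.false

theorem card_filter_eq_one (hA : IsBaranyaiFamily u m V A) (hV : #V = m) {S : Finset α}
    (hS : S ⊆ V) (hSu : #S = u) : #{p : ι × κ | A p.1 p.2 = S} = 1 := by
  simp [hA.card_filter_eq S hS, hV, hSu]

theorem injective_of_card_eq (hA : IsBaranyaiFamily u m V A) (hV : #V = m) (hu : 0 < u)
    (j : ι) : Injective (A j) := by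
  intro t t' h
  by_contra hne
  obtain ⟨x, hx⟩ := card_pos.mp ((hA.card_eq_of_card_eq hV j t).symm ▸ hu)
  exact disjoint_left.mp (hA.pairwise_disjoint j hne) hx (h ▸ hx)

theorem disjoint_image_of_card_eq (hA : IsBaranyaiFamily u m V A) (hV : #V = m) {j j' : ι}
    (h : j ≠ j') : Disjoint (univ.image (A j)) (univ.image (A j')) := by
  refine disjoint_left.mpr fun S hS hS' => h ?_
  obtain ⟨t, -, rfl⟩ := mem_image.mp hS
  obtain ⟨t', -, ht'⟩ := mem_image.mp hS'
  have hone := hA.card_filter_eq_one hV (hA.subset j t) (hA.card_eq_of_card_eq hV j t)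
  exact congrArg Prod.fst (card_le_one.mp hone.le (j, t) (by simp) (j', t') (by simp [ht']))

theorem biUnion_image_of_card_eq (hA : IsBaranyaiFamily u m V A) (hV : #V = m) :
    univ.biUnion (fun j => univ.image (A j)) = powersetCard u V := by
  ext S
  simp only [mem_biUnion, mem_image, mem_univ, true_and, mem_powersetCard]
  constructor
  · rintro ⟨j, t, rfl⟩
    exact ⟨hA.subset j t, hA.card_eq_of_card_eq hV j t⟩
  · rintro ⟨hS, hSu⟩
    obtain ⟨p, hp⟩ := card_pos.mp ((hA.card_filter_eq_one hV hS hSu).symm ▸ one_pos)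
    exact ⟨p.1, p.2, (mem_filter.mp hp).2⟩

variable [DecidableEq κ]

variable {a : α} {σ : ι → κ}

theorem card_filter_extend_of_mem (hA : IsBaranyaiFamily u m V A) (ha : a ∉ V)
    (hσ : ∀ S ⊆ V,
      #{j | A j (σ j) = S} = if #S < u then (m - #V - 1).choose (u - 1 - #S) else 0)
    {S : Finset α} (hS : S.erase a ⊆ V) (haS : a ∈ S) :
    #{p : ι × κ | (if p.2 = σ p.1 then insert a (A p.1 p.2) else A p.1 p.2) = S} =
      if #S ≤ u then (m - (#V + 1)).choose (u - #S) else 0 := by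
  have hS0 : 0 < #S := card_pos.mpr ⟨a, haS⟩
  have key (p : ι × κ) : ((if p.2 = σ p.1 then insert a (A p.1 p.2) else A p.1 p.2) = S) ↔
      p.2 = σ p.1 ∧ A p.1 (σ p.1) = S.erase a := by
    have hna : a ∉ A p.1 p.2 := fun h => ha (hA.subset _ _ h)
    split_ifs with h
    · rw [← h, and_iff_right rfl]
      exact ⟨fun h => by rw [← h, erase_insert hna], fun h => by rw [h, insert_erase haS]⟩
    · exact iff_of_false (fun h' => hna (h' ▸ haS)) (fun h' => h h'.1)
  rw [filter_congr fun p _ => key p, card_filter_snd_eq_and σ fun j => A j (σ j) = S.erase a,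
    hσ _ hS, card_erase_of_mem haS]
  rw [show m - (#V + 1) = m - #V - 1 by omega, show u - 1 - (#S - 1) = u - #S by omega]
  exact if_congr (by omega) rfl rfl

theorem card_filter_extend_of_notMem (hA : IsBaranyaiFamily u m V A) (hV : #V < m)
    (hσ : ∀ S ⊆ V,
      #{j | A j (σ j) = S} = if #S < u then (m - #V - 1).choose (u - 1 - #S) else 0)
    {S : Finset α} (hS : S ⊆ V) (haS : a ∉ S) :
    #{p : ι × κ | (if p.2 = σ p.1 then insert a (A p.1 p.2) else A p.1 p.2) = S} =
      if #S ≤ u then (m - (#V + 1)).choose (u - #S) else 0 := by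
  have key (p : ι × κ) : ((if p.2 = σ p.1 then insert a (A p.1 p.2) else A p.1 p.2) = S) ↔
      A p.1 p.2 = S ∧ ¬ p.2 = σ p.1 := by
    split_ifs with h
    · exact iff_of_false (fun h' => haS (h' ▸ mem_insert_self _ _)) (fun h' => h'.2 h)
    · exact ⟨fun h' => ⟨h', h⟩, fun h' => h'.1⟩
  have hfixed : #{p : ι × κ | A p.1 p.2 = S ∧ p.2 = σ p.1} = #{j | A j (σ j) = S} := by
    rw [← card_filter_snd_eq_and σ fun j => A j (σ j) = S]
    exact congrArg card (filter_congr fun p _ =>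
      ⟨fun ⟨h1, h2⟩ => ⟨h2, h2 ▸ h1⟩, fun ⟨h1, h2⟩ => ⟨h1 ▸ h2, h1⟩⟩)
  have hsplit := card_filter_add_card_filter_not (s := {p : ι × κ | A p.1 p.2 = S})
    (p := fun p => p.2 = σ p.1)
  rw [filter_filter, filter_filter, hfixed, hσ S hS, hA.card_filter_eq S hS] at hsplit
  rw [filter_congr fun p _ => key p]
  by_cases hSu : #S ≤ u
  · rw [if_pos hSu, Nat.choose_sub_eq_add (by omega) hSu] at hsplit
    rw [if_pos hSu, show m - (#V + 1) = m - #V - 1 by omega]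
    omega
  · rw [if_neg hSu, if_neg (by omega : ¬ #S < u)] at hsplit
    rw [if_neg hSu]
    omega

theorem extend (hA : IsBaranyaiFamily u m V A) (ha : a ∉ V) (hV : #V < m)
    (hσ : ∀ S ⊆ V,
      #{j | A j (σ j) = S} = if #S < u then (m - #V - 1).choose (u - 1 - #S) else 0) :
    IsBaranyaiFamily u m (insert a V) fun j t => if t = σ j then insert a (A j t) else A j t where
  biUnion_eq j := by
    ext x
    simp only [mem_biUnion, mem_univ, true_and, mem_insert, ← hA.biUnion_eq j]
    constructor
    · rintro ⟨t, ht⟩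
      split_ifs at ht <;> grind
    · rintro (rfl | ⟨t, ht⟩)
      · exact ⟨σ j, by simp⟩
      · exact ⟨t, by split_ifs <;> simp [ht]⟩
  pairwise_disjoint j t t' htt' := by
    have hna (t) : a ∉ A j t := fun h => ha (hA.subset j t h)
    have hd := hA.pairwise_disjoint j htt'
    dsimp only [onFun]
    split_ifs with h h' h'
    · exact absurd (h.trans h'.symm) htt'
    · exact disjoint_insert_left.mpr ⟨hna t', hd⟩
    · exact disjoint_insert_right.mpr ⟨hna t, hd⟩
    · exact hd
  card_filter_eq S hS := by
    rw [card_insert_of_notMem ha]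
    by_cases haS : a ∈ S
    · exact hA.card_filter_extend_of_mem ha hσ (subset_insert_iff.mp hS) haS
    · exact hA.card_filter_extend_of_notMem hV hσ ((subset_insert_iff_of_notMem haS).mp hS) haS

end IsBaranyaiFamily

theorem exists_isBaranyaiFamily [DecidableEq κ] {u m : ℕ} (hu : 0 < u)
    (hm : Fintype.card κ * u = m) (hι : Fintype.card ι = (m - 1).choose (u - 1))
    (V : Finset α) (hV : #V ≤ m) :
    ∃ A : ι → κ → Finset α, IsBaranyaiFamily u m V A := by
  induction V using Finset.induction_on with
  | empty =>
    refine ⟨_, isBaranyaiFamily_empty ?_⟩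
    rw [hι, ← hm, Nat.choose_pred_mul_eq _ _ hu]
  | insert a V ha ih =>
    rw [card_insert_of_notMem ha] at hV
    obtain ⟨A, hA⟩ := ih (by omega)
    obtain ⟨σ, hσ⟩ := hA.exists_block_choice hu hm hι (by omega)
    exact ⟨_, hA.extend ha (by omega) hσ⟩

theorem Finset.card_filter_image_mem_eq {B : κ → Finset α} (hB : Pairwise (Disjoint on B))
    (a : α) :
    #{S ∈ univ.image B | a ∈ S} = if a ∈ univ.biUnion B then 1 else 0 := by
  split_ifs with ha
  · obtain ⟨t, -, ht⟩ := mem_biUnion.mp ha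
    refine card_eq_one.mpr
      ⟨B t, eq_singleton_iff_unique_mem.mpr ⟨by simp [ht], fun S hS => ?_⟩⟩
    obtain ⟨⟨t', -, rfl⟩, ht'⟩ := And.imp_left mem_image.mp (mem_filter.mp hS)
    by_contra hne
    exact disjoint_left.mp (hB fun h : t' = t => hne (congrArg B h)) ht' ht
  · refine card_eq_zero.mpr (filter_eq_empty_iff.mpr fun S hS haS => ha ?_)
    obtain ⟨t, -, rfl⟩ := mem_image.mp hS
    exact mem_biUnion.mpr ⟨t, mem_univ t, haS⟩

theorem Finset.sum_ite_mem_eq_one_add {T : Finset (Finset α)} (hT : Odd #T) (a : α) :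
    ∑ S ∈ T, (if a ∈ S then (0 : ZMod 2) else 1) = 1 + #{S ∈ T | a ∈ S} := by
  have h := card_filter_add_card_filter_not (s := T) (p := (a ∈ ·))
  have hT' : (#T : ZMod 2) = 1 := (ZMod.natCast_eq_one_iff_odd).mpr hT
  rw [sum_ite, sum_const_zero, zero_add, sum_const, nsmul_one]
  rw [← h] at hT'
  push_cast at hT'
  grind

end

theorem partition_of_punctured_subsets_general (Ω : Type*) [Fintype Ω] [DecidableEq Ω]
    (ρ u n : ℕ) (hρodd : Odd ρ) (hu : 0 < u) (hn : n = ρ * u + 1)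
    (hΩ : Fintype.card Ω = n) (ωi : Ω) :
    ∃ T : Fin ((n - 2).choose (u - 1)) → Finset (Finset Ω),
      (∀ j j', j ≠ j' → Disjoint (T j) (T j')) ∧
      (Finset.univ.biUnion T =
        Finset.powersetCard u ((Finset.univ : Finset Ω).erase ωi)) ∧
      (∀ j, (T j).card = ρ) ∧
      (∀ j, ∀ a : Ω, a ≠ ωi → ((T j).filter (fun S => a ∈ S)).card = 1) ∧
      (∀ j, (fun a : Ω => ∑ S ∈ T j, if a ∈ S then (0 : ZMod 2) else 1) =
        (fun a : Ω => if a = ωi then (1 : ZMod 2) else 0)) := by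
  subst hn
  have hV : #(univ.erase ωi) = ρ * u := by
    rw [card_erase_of_mem (mem_univ _), card_univ, hΩ, Nat.add_sub_cancel]
  obtain ⟨A, hA⟩ := exists_isBaranyaiFamily (ι := Fin ((ρ * u + 1 - 2).choose (u - 1)))
    (κ := Fin ρ) hu (by rw [Fintype.card_fin])
    (by rw [Fintype.card_fin, show ρ * u + 1 - 2 = ρ * u - 1 by omega]) _ hV.le
  have hcard (j) : #(univ.image (A j)) = ρ := by
    rw [card_image_of_injective _ (hA.injective_of_card_eq hV hu j), card_univ, Fintype.card_fin]
  have hmem (j) (a : Ω) : #{S ∈ univ.image (A j) | a ∈ S} = if a = ωi then 0 else 1 := by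
    rw [card_filter_image_mem_eq (hA.pairwise_disjoint j), hA.biUnion_eq]
    simp [ite_not]
  refine ⟨fun j => univ.image (A j), fun j j' h => hA.disjoint_image_of_card_eq hV h,
    hA.biUnion_image_of_card_eq hV, hcard, fun j a ha => by rw [hmem, if_neg ha],
    fun j => funext fun a => ?_⟩
  rw [sum_ite_mem_eq_one_add ((hcard j).symm ▸ hρodd), hmem]
  split_ifs <;> decide

/-- Let `ρ > 1` be an odd integer, `u` a positive integer, `n = ρu + 1`, `Ω` an
`n`-element set and `ωᵢ ∈ Ω`. Then the family of all `u`-element subsets of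
`Ω ∖ {ωᵢ}` can be partitioned into `k = C(n−2, u−1)` pairwise disjoint classes
`T_{i1}, …, T_{ik}`, each consisting of exactly `ρ = (n−1)/u` subsets, such that
each class is a partition of `Ω ∖ {ωᵢ}`, and consequently for every `j ∈ [k]`
the sum over `𝔽₂` of the vectors `{χ_{Ω∖S} : S ∈ T_{ij}}` in `𝔽₂^Ω` equals the
unit vector `e_{ωᵢ}`. -/
theorem partition_of_punctured_subsets (Ω : Type*) [Fintype Ω] [DecidableEq Ω]
    (ρ u n : ℕ) (hρ : 1 < ρ) (hρodd : Odd ρ) (hu : 0 < u) (hn : n = ρ * u + 1)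
    (hΩ : Fintype.card Ω = n) (ωi : Ω) :
    ∃ T : Fin ((n - 2).choose (u - 1)) → Finset (Finset Ω),
      (∀ j j', j ≠ j' → Disjoint (T j) (T j')) ∧
      (Finset.univ.biUnion T =
        Finset.powersetCard u ((Finset.univ : Finset Ω).erase ωi)) ∧
      (∀ j, (T j).card = ρ) ∧
      (∀ j, ∀ a : Ω, a ≠ ωi → ((T j).filter (fun S => a ∈ S)).card = 1) ∧
      (∀ j, (fun a : Ω => ∑ S ∈ T j, if a ∈ S then (0 : ZMod 2) else 1) =
        (fun a : Ω => if a = ωi then (1 : ZMod 2) else 0)) :=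
  partition_of_punctured_subsets_general Ω ρ u n hρodd hu hn hΩ ωi
end

section
/- Let ρ > 1 be an odd integer, u a positive integer, n = ρu + 1, and N = C(n,u). Let A be the n × N matrix over 𝔽₂ whose columns are the characteristic vectors of all u-element subsets of an n-element set Ω = {ω_1, …, ω_n}, and let G be the n × N matrix over 𝔽₂ with entries g_{ij} = 1 + a_{ij} (the coordinatewise complement of A). Then for every i ∈ [n]: the set T_i = { ℓ ∈ [N] : g_{iℓ} = 1 } consists exactly of the columns indexed by u-subsets of Ω ∖ {ω_i}, has cardinality C(n−1, u) = (1 − u/n)·N, and can be partitioned into k = C(n−2, u−1) pairwise disjoint sets T_{i1}, …, T_{ik}, each of cardinality ρ, such that for every j ∈ [k] the sum over 𝔽₂ of the columns {G_ℓ : ℓ ∈ T_{ij}} equals the i-th unit vector e_i ∈ 𝔽₂^n. -/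
/-!
Over `𝔽₂` the column of `G` indexed by a `u`-set `S` is `1 + 𝟙_S`. Hence `Tᵢ` consists of the
`u`-subsets of `X = Ω ∖ {ωᵢ}`, where `|X| = ρu`, and a parallel class of such sets (`ρ` disjoint
sets covering `X`) has column sum `ρ • 1 + 𝟙_X = eᵢ`, because `ρ` is odd. The required partition of
`Tᵢ` is therefore a resolution of the complete `u`-uniform hypergraph on `X` into
`C(ρu - 1, u - 1)` parallel classes, which exists by Baranyai's theorem.

Baranyai's theorem is proved as by Brouwer and Schrijver: the `m = ρu` points of `X` are added one
at a time to `k = C(m - 1, u - 1)` partial partitions, keeping every nonempty set `A` of at most `u`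
placed points in exactly `C(m - |Y|, u - |A|)` of them, where `Y` is the set of points placed so
far. Choosing the part that receives the next point in each class is the rounding of a fractional
assignment, which Hall's marriage theorem makes possible.
-/

open Finset

theorem Nat.mul_choose_pred_pred (t : ℕ) {c : ℕ} (hc : 0 < c) :
    t * (t - 1).choose (c - 1) = t.choose c * c := by
  obtain ⟨c, rfl⟩ := Nat.exists_eq_add_of_le' hc
  rcases t with _ | t
  · simp
  · simpa using Nat.add_one_mul_choose_eq t c

theorem Nat.cast_choose_pred_eq {K : Type*} [Field K] [CharZero K] {n : ℕ} (hn : 0 < n) (u : ℕ) :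
    ((n - 1).choose u : K) = (1 - u / n) * n.choose u := by
  obtain ⟨n, rfl⟩ := Nat.exists_eq_add_of_le' hn
  rcases le_or_gt u (n + 1) with hu | hu
  · have h : (n.choose u : K) * (n + 1) = (n + 1).choose u * ((n + 1 : ℕ) - u : K) := by
      rw [← Nat.cast_sub hu]; exact_mod_cast Nat.choose_mul_succ_eq n u
    rw [Nat.add_sub_cancel]
    field_simp
    push_cast at h ⊢
    linear_combination h
  · rw [Nat.choose_eq_zero_of_lt hu, Nat.choose_eq_zero_of_lt (by omega)]; simp

theorem Finset.sum_powerset_choose_sub_card {α : Type*} (Y : Finset α) (t r : ℕ) :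
    ∑ A ∈ Y.powerset with #A ≤ r, t.choose (r - #A) = (#Y + t).choose r := by
  rw [sum_filter, sum_powerset_apply_card (fun a => if a ≤ r then t.choose (r - a) else 0),
    Nat.add_choose_eq, Nat.sum_antidiagonal_eq_sum_range_succ_mk]
  have hsupp : ∀ a, (#Y).choose a • (if a ≤ r then t.choose (r - a) else 0)
      = if a ≤ r then (#Y).choose a * t.choose (r - a) else 0 := by
    intro a; split_ifs <;> simp
  simp_rw [hsupp]
  rw [← sum_filter]
  refine sum_subset (fun a => by simp) fun a ha ha' => ?_
  simp only [mem_filter, mem_range] at ha ha'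
  rw [Nat.choose_eq_zero_of_lt (by omega), zero_mul]

section Assignment

variable {ι β : Type*} [Fintype ι] [DecidableEq β]

theorem exists_card_fiber_le_of_weights (C : Finset β) (w : ι → β → ℕ) (d : β → ℕ) {c : ℕ}
    (hc : 0 < c) (hrow : ∀ j, ∑ A ∈ C, w j A = c) (hcol : ∀ A ∈ C, ∑ j, w j A ≤ d A * c) :
    ∃ g : ι → β, (∀ j, g j ∈ C ∧ 0 < w j (g j)) ∧ ∀ A, #{j | g j = A} ≤ d A := by
  -- `j` may be matched to any of `d A` copies of an `A` of positive weight
  set t : ι → Finset (Σ _ : β, ℕ) := fun j => ({A ∈ C | 0 < w j A}).sigma fun A => range (d A)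
  have hall : ∀ J : Finset ι, #J ≤ #(J.biUnion t) := by
    intro J
    set S := {A ∈ C | ∃ j ∈ J, 0 < w j A}
    have hS : J.biUnion t = S.sigma fun A => range (d A) := by
      ext ⟨A, k⟩
      simp only [t, S, mem_biUnion, mem_sigma, mem_filter, mem_range]
      aesop
    have key : #J * c ≤ #(J.biUnion t) * c := calc
      #J * c = ∑ j ∈ J, ∑ A ∈ C, w j A := by
        rw [sum_congr rfl fun j _ => hrow j, sum_const, smul_eq_mul]
      _ = ∑ A ∈ S, ∑ j ∈ J, w j A := by
        rw [sum_comm]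
        refine (sum_subset (filter_subset _ _) fun A hA hAS => ?_).symm
        simp only [mem_filter, hA, true_and, not_exists, not_and, not_lt] at hAS
        exact sum_eq_zero fun j hj => Nat.le_zero.1 (hAS j hj)
      _ ≤ ∑ A ∈ S, ∑ j, w j A := sum_le_sum fun A _ => sum_le_sum_of_subset (subset_univ J)
      _ ≤ ∑ A ∈ S, d A * c := sum_le_sum fun A hA => hcol A (mem_filter.1 hA).1
      _ = #(J.biUnion t) * c := by rw [hS, card_sigma, sum_mul]; simp
    exact Nat.le_of_mul_le_mul_right key hc
  obtain ⟨f, hf, hft⟩ := (all_card_le_biUnion_card_iff_exists_injective t).1 hall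
  refine ⟨fun j => (f j).1, fun j => ?_, fun A => ?_⟩
  · have := hft j
    simp only [t, mem_sigma, mem_filter] at this
    exact this.1
  · calc #{j | (f j).1 = A} ≤ #(range (d A)) := by
          refine card_le_card_of_injOn (fun j => (f j).2) (fun j hj => ?_) fun j hj j' hj' h => ?_
          · have := hft j
            simp only [t, mem_sigma, mem_filter, coe_filter, mem_univ, true_and,
              Set.mem_ofPred_eq] at this hj
            simpa [← hj] using this.2
          · simp only [coe_filter, Set.mem_ofPred_eq, mem_univ, true_and] at hj hj'
            exact hf (Sigma.ext (hj.trans hj'.symm) (heq_of_eq h))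
      _ = d A := card_range _

theorem card_fiber_eq_of_le_of_sum_eq {C : Finset β} {g : ι → β} {d : β → ℕ}
    (hg : ∀ j, g j ∈ C) (hle : ∀ A ∈ C, #{j | g j = A} ≤ d A)
    (hsum : ∑ A ∈ C, d A = Fintype.card ι) : ∀ A ∈ C, #{j | g j = A} = d A := by
  refine (sum_eq_sum_iff_of_le hle).1 ?_
  rw [hsum, ← card_univ, card_eq_sum_card_fiberwise fun j _ => hg j]

end Assignment

variable {α : Type*} [DecidableEq α]

theorem Finset.mem_insert_insert_erase_of_mem {P : Finset (Finset α)} {x : α} {g B : Finset α}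
    (hxP : ∀ A ∈ P, x ∉ A) (hxg : x ∉ g) (hxB : x ∈ B) :
    B ∈ insert (insert x g) (P.erase g) ↔ g = B.erase x := by
  rw [mem_insert, mem_erase]
  constructor
  · rintro (rfl | ⟨-, hB⟩)
    exacts [(erase_insert hxg).symm, absurd hxB (hxP B hB)]
  · rintro rfl; exact Or.inl (insert_erase hxB).symm

theorem Finset.mem_insert_insert_erase_of_notMem {P : Finset (Finset α)} {x : α} {g B : Finset α}
    (hxB : x ∉ B) : B ∈ insert (insert x g) (P.erase g) ↔ B ∈ P ∧ g ≠ B := by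
  rw [mem_insert, mem_erase]
  constructor
  · rintro (rfl | ⟨hgB, hB⟩)
    exacts [absurd (mem_insert_self x g) hxB, ⟨hB, Ne.symm hgB⟩]
  · rintro ⟨hB, hgB⟩; exact Or.inr ⟨Ne.symm hgB, hB⟩

structure IsBoundedPartition (u ρ : ℕ) (Y : Finset α) (P : Finset (Finset α)) : Prop where
  nonempty : ∀ A ∈ P, A.Nonempty
  card_le : ∀ A ∈ P, #A ≤ u
  pairwiseDisjoint : (P : Set (Finset α)).PairwiseDisjoint id
  biUnion_eq : P.biUnion id = Y
  card_parts_le : #P ≤ ρ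

namespace IsBoundedPartition

variable {u ρ : ℕ} {Y : Finset α} {P : Finset (Finset α)}

theorem empty : IsBoundedPartition u ρ (∅ : Finset α) ∅ :=
  ⟨by simp, by simp, by simp, by simp, by simp⟩

theorem subset (hP : IsBoundedPartition u ρ Y P) {A : Finset α} (hA : A ∈ P) : A ⊆ Y :=
  hP.biUnion_eq ▸ subset_biUnion_of_mem id hA

theorem sum_card (hP : IsBoundedPartition u ρ Y P) : ∑ A ∈ P, #A = #Y := by
  rw [← hP.biUnion_eq, card_biUnion hP.pairwiseDisjoint]; rfl

theorem existsUnique_mem (hP : IsBoundedPartition u ρ Y P) {x : α} (hx : x ∈ Y) :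
    ∃! A, A ∈ P ∧ x ∈ A := by
  rw [← hP.biUnion_eq, mem_biUnion] at hx
  obtain ⟨A, hA, hxA⟩ := hx
  exact ⟨A, ⟨hA, hxA⟩, fun B ⟨hB, hxB⟩ =>
    hP.pairwiseDisjoint.elim hB hA (not_disjoint_iff.2 ⟨x, hxB, hxA⟩)⟩

/-- Put the new point `x` into the part `g`, which opens a new part when `g = ∅`. -/
theorem extend (hP : IsBoundedPartition u ρ Y P) {x : α} (hx : x ∉ Y) {g : Finset α}
    (hg : #g < u) (hgP : g ∈ P ∨ g = ∅ ∧ #P < ρ) :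
    IsBoundedPartition u ρ (insert x Y) (insert (insert x g) (P.erase g)) := by
  refine ⟨?_, ?_, ?_, ?_, ?_⟩
  · simp only [mem_insert, mem_erase]
    rintro A (rfl | ⟨-, hA⟩)
    exacts [insert_nonempty _ _, hP.nonempty A hA]
  · simp only [mem_insert, mem_erase]
    rintro A (rfl | ⟨-, hA⟩)
    exacts [(card_insert_le _ _).trans hg, hP.card_le A hA]
  · rw [coe_insert, coe_erase]
    refine (hP.pairwiseDisjoint.subset Set.sdiff_subset).insert fun B hB _ => ?_
    simp only [Set.mem_sdiff, mem_coe, Set.mem_singleton_iff] at hB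
    rw [id, id, disjoint_insert_left]
    refine ⟨fun hxB => hx (hP.subset hB.1 hxB), ?_⟩
    rcases hgP with h | ⟨rfl, -⟩
    exacts [hP.pairwiseDisjoint h hB.1 (Ne.symm hB.2), disjoint_empty_left _]
  · have hY : g ∪ (P.erase g).biUnion id = Y := by
      rcases hgP with h | ⟨rfl, -⟩
      · rw [← hP.biUnion_eq, ← insert_erase h, biUnion_insert, erase_insert (notMem_erase g P), id]
      · rw [empty_union, erase_eq_of_notMem fun h => not_nonempty_empty (hP.nonempty ∅ h),
          hP.biUnion_eq]
    rw [biUnion_insert, id, insert_union, hY]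
  · refine (card_insert_le _ _).trans ?_
    rcases hgP with h | ⟨rfl, h⟩
    · rw [card_erase_add_one h]; exact hP.card_parts_le
    · exact Nat.succ_le_of_lt (card_erase_le.trans_lt h)

end IsBoundedPartition

namespace Baranyai

variable {ι : Type*} [Fintype ι] {m u ρ : ℕ} {Y : Finset α}

/-- The room left in the part `A` of `P`; `∅` stands for the `ρ - #P` parts not yet opened. -/
def slack (u ρ : ℕ) (P : Finset (Finset α)) (A : Finset α) : ℕ :=
  (if A ∈ P then u - #A else 0) + if A = ∅ then (ρ - #P) * u else 0

theorem mem_or_of_slack_pos {P : Finset (Finset α)} {A : Finset α} (h : 0 < slack u ρ P A) :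
    A ∈ P ∨ A = ∅ ∧ #P < ρ := by
  unfold slack at h
  by_cases hA : A ∈ P
  · exact Or.inl hA
  · rw [if_neg hA, zero_add] at h
    split_ifs at h with hA'
    · exact Or.inr ⟨hA', Nat.sub_pos_iff_lt.1 (Nat.pos_of_mul_pos_right h)⟩
    · exact absurd h (lt_irrefl 0)

theorem sum_slack {P : Finset (Finset α)} (hP : IsBoundedPartition u ρ Y P) (hu : 0 < u) :
    ∑ A ∈ Y.powerset with #A < u, slack u ρ P A = ρ * u - #Y := by
  have hparts : ∑ A ∈ Y.powerset with #A < u, (if A ∈ P then u - #A else 0)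
      = ∑ A ∈ P, (u - #A) := by
    rw [sum_ite_mem]
    refine sum_subset inter_subset_right fun A hA hA' => ?_
    simp only [mem_inter, mem_filter, mem_powerset, hP.subset hA, hA, true_and, and_true,
      not_lt] at hA'
    omega
  have hfill : ∑ A ∈ P, (u - #A) + #Y = #P * u := by
    rw [← hP.sum_card, ← sum_add_distrib,
      sum_congr rfl fun A hA => tsub_add_cancel_of_le (hP.card_le A hA), sum_const, smul_eq_mul]
  have hempty : (∅ : Finset α) ∈ Y.powerset.filter (#· < u) := by simpa using hu
  have hρ : (ρ - #P) * u + #P * u = ρ * u := by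
    rw [← add_mul, tsub_add_cancel_of_le hP.card_parts_le]
  simp only [slack]
  rw [sum_add_distrib, hparts, sum_ite_eq' _ _ _, if_pos hempty]
  omega

/-- A set `A` lies in as many classes as it has completions to a `u`-set by the `m - #Y` points
still to come. -/
structure IsStage (m u ρ : ℕ) (Y : Finset α) (P : ι → Finset (Finset α)) : Prop where
  isBoundedPartition : ∀ j, IsBoundedPartition u ρ Y (P j)
  card_filter_mem : ∀ A ⊆ Y, A.Nonempty → #A ≤ u → #{j | A ∈ P j} = (m - #Y).choose (u - #A)

variable {P : ι → Finset (Finset α)}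

theorem isStage_empty (m u ρ : ℕ) : IsStage m u ρ (∅ : Finset α) fun _ : ι => ∅ :=
  ⟨fun _ => IsBoundedPartition.empty, fun _ hA hne _ => absurd (subset_empty.1 hA) hne.ne_empty⟩

theorem IsStage.exists_choice (hP : IsStage m u ρ Y P) (hu : 0 < u) (hm : m = ρ * u)
    (hι : Fintype.card ι = (m - 1).choose (u - 1)) (hY : #Y < m) :
    ∃ g : ι → Finset α, (∀ j, g j ⊆ Y ∧ #(g j) < u ∧ (g j ∈ P j ∨ g j = ∅ ∧ #(P j) < ρ)) ∧
      ∀ A ⊆ Y, #A < u → #{j | g j = A} = (m - #Y - 1).choose (u - 1 - #A) := by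
  set C := Y.powerset.filter (#· < u)
  set d : Finset α → ℕ := fun A => (m - #Y - 1).choose (u - 1 - #A)
  set w : ι → Finset α → ℕ := fun j => slack u ρ (P j)
  have hrow : ∀ j, ∑ A ∈ C, w j A = m - #Y := fun j =>
    hm ▸ sum_slack (hP.isBoundedPartition j) hu
  have hsum : ∑ A ∈ C, d A = Fintype.card ι := by
    have hC : C = Y.powerset.filter (#· ≤ u - 1) := filter_congr fun A _ => by omega
    rw [hι, hC, sum_powerset_choose_sub_card, show #Y + (m - #Y - 1) = m - 1 by omega]
  have hcol_ne : ∀ A ∈ C, A ≠ ∅ → ∑ j, w j A = d A * (m - #Y) := by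
    intro A hA hne
    simp only [C, mem_filter, mem_powerset] at hA
    have hwA : ∀ j, w j A = if A ∈ P j then u - #A else 0 := by simp [w, slack, hne]
    rw [sum_congr rfl fun j _ => hwA j, ← sum_filter, sum_const, smul_eq_mul,
      hP.card_filter_mem A hA.1 (nonempty_iff_ne_empty.2 hne) hA.2.le,
      ← Nat.mul_choose_pred_pred _ (by omega : 0 < u - #A), Nat.sub_right_comm u, mul_comm]
  -- the column of `∅` is then forced by the total weight
  have hcol : ∀ A ∈ C, ∑ j, w j A = d A * (m - #Y) := by
    have htot : ∑ A ∈ C, ∑ j, w j A = ∑ A ∈ C, d A * (m - #Y) := by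
      rw [sum_comm, sum_congr rfl fun j _ => hrow j, sum_const, card_univ, ← sum_mul, hsum,
        smul_eq_mul]
    have hempty : ∅ ∈ C := by simpa [C] using hu
    intro A hA
    by_cases hne : A = ∅
    · rw [← add_sum_erase _ _ hempty, ← add_sum_erase _ _ hempty, sum_congr rfl fun B hB =>
        hcol_ne B (mem_of_mem_erase hB) (ne_of_mem_erase hB)] at htot
      rw [hne]; omega
    · exact hcol_ne A hA hne
  obtain ⟨g, hgw, hgle⟩ := exists_card_fiber_le_of_weights C w d (by omega) hrow
    fun A hA => (hcol A hA).le
  have hgC : ∀ j, g j ∈ C := fun j => (hgw j).1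
  refine ⟨g, fun j => ?_, fun A hAY hA =>
    card_fiber_eq_of_le_of_sum_eq hgC (fun A _ => hgle A) hsum A (by simp [C, hAY, hA])⟩
  obtain ⟨hgC, hpos⟩ := hgw j
  simp only [C, mem_filter, mem_powerset] at hgC
  exact ⟨hgC.1, hgC.2, mem_or_of_slack_pos hpos⟩

theorem IsStage.exists_insert (hP : IsStage m u ρ Y P) (hu : 0 < u) (hm : m = ρ * u)
    (hι : Fintype.card ι = (m - 1).choose (u - 1)) (hY : #Y < m) {x : α} (hx : x ∉ Y) :
    ∃ P' : ι → Finset (Finset α), IsStage m u ρ (insert x Y) P' := by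
  classical
  obtain ⟨g, hg, hfib⟩ := hP.exists_choice hu hm hι hY
  have hxP : ∀ j, ∀ A ∈ P j, x ∉ A := fun j A hA hxA =>
    hx ((hP.isBoundedPartition j).subset hA hxA)
  have hxg : ∀ j, x ∉ g j := fun j h => hx ((hg j).1 h)
  refine ⟨fun j => insert (insert x (g j)) ((P j).erase (g j)),
    fun j => (hP.isBoundedPartition j).extend hx (hg j).2.1 (hg j).2.2, ?_⟩
  intro B hB hne hBu
  rw [card_insert_of_notMem hx]
  by_cases hxB : x ∈ B
  · simp_rw [mem_insert_insert_erase_of_mem (hxP _) (hxg _) hxB]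
    have hB1 : 1 ≤ #B := card_pos.2 hne
    rw [hfib _ (subset_insert_iff.1 hB) (by rw [card_erase_of_mem hxB]; omega),
      card_erase_of_mem hxB]
    congr 1; omega
  · simp_rw [mem_insert_insert_erase_of_notMem hxB]
    have hBY : B ⊆ Y := (subset_insert_iff_of_notMem hxB).1 hB
    have hsub : univ.filter (fun j => g j = B) ⊆ univ.filter (fun j => B ∈ P j) := by
      intro j
      simp only [mem_filter, mem_univ, true_and]
      rintro rfl
      exact (hg j).2.2.resolve_right fun h => hne.ne_empty h.1
    rw [filter_and_not, card_sdiff_of_subset hsub, hP.card_filter_mem B hBY hne hBu]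
    rcases hBu.lt_or_eq with hlt | heq
    · rw [hfib B hBY hlt, Nat.choose_eq_choose_pred_add (by omega) (by omega)]
      rw [Nat.sub_right_comm u, Nat.add_sub_cancel_left, Nat.sub_add_eq]
    · have hempty : univ.filter (fun j => g j = B) = ∅ :=
        filter_false_of_mem fun j _ h => (hg j).2.1.ne (h ▸ heq)
      rw [hempty, heq]
      simp

theorem exists_isStage (hu : 0 < u) (hm : m = ρ * u)
    (hι : Fintype.card ι = (m - 1).choose (u - 1)) (Y : Finset α) (hY : #Y ≤ m) :
    ∃ P : ι → Finset (Finset α), IsStage m u ρ Y P := by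
  induction Y using Finset.induction_on with
  | empty => exact ⟨_, isStage_empty m u ρ⟩
  | insert x Y hx ih =>
    rw [card_insert_of_notMem hx] at hY
    obtain ⟨P, hP⟩ := ih (by omega)
    exact hP.exists_insert hu hm hι (by omega) hx

end Baranyai

/-- **Baranyai's theorem**. -/
theorem Finset.exists_resolution_powersetCard {ι : Type*} [Fintype ι] {u ρ : ℕ} (X : Finset α)
    (hu : 0 < u) (hX : #X = ρ * u) (hι : Fintype.card ι = (#X - 1).choose (u - 1)) :
    ∃ P : ι → Finset (Finset α), (∀ j, P j ⊆ X.powersetCard u) ∧ (∀ j, #(P j) = ρ) ∧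
      (∀ j, ∀ x ∈ X, ∃! A, A ∈ P j ∧ x ∈ A) ∧ ∀ S ∈ X.powersetCard u, ∃! j, S ∈ P j := by
  obtain ⟨P, hpart, hcount⟩ := Baranyai.exists_isStage hu hX hι X le_rfl
  have hcard : ∀ j, ∀ A ∈ P j, #A = u := by
    intro j A hA
    by_contra hAu
    have h := hcount A ((hpart j).subset hA) ((hpart j).nonempty A hA) ((hpart j).card_le A hA)
    rw [Nat.sub_self, Nat.choose_eq_zero_of_lt (by have := (hpart j).card_le A hA; omega),
      card_eq_zero, filter_eq_empty_iff] at h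
    exact h (mem_univ j) hA
  refine ⟨P, fun j A hA => mem_powersetCard.2 ⟨(hpart j).subset hA, hcard j A hA⟩, fun j => ?_,
    fun j x hx => (hpart j).existsUnique_mem hx, fun S hS => ?_⟩
  · have h := (hpart j).sum_card
    rw [sum_congr rfl (hcard j), sum_const, smul_eq_mul, hX] at h
    exact Nat.eq_of_mul_eq_mul_right hu h
  · rw [mem_powersetCard] at hS
    have h := hcount S hS.1 (card_pos.1 (by omega)) hS.2.le
    rw [Nat.sub_self, hS.2, Nat.sub_self, Nat.choose_self, card_eq_one] at h
    obtain ⟨j, hj⟩ := h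
    rw [eq_singleton_iff_unique_mem] at hj
    simp only [mem_filter, mem_univ, true_and] at hj
    exact ⟨j, hj⟩

theorem sum_one_add_indicator_eq_single {γ : Type*} [DecidableEq γ] {Q : Finset (Finset γ)}
    {i : γ} (hQ : Odd #Q) (hi : ∀ S ∈ Q, i ∉ S) (hcover : ∀ r, r ≠ i → ∃! S, S ∈ Q ∧ r ∈ S) :
    ∑ S ∈ Q, (fun r => 1 + if r ∈ S then 1 else 0 : γ → ZMod 2) = Pi.single i 1 := by
  funext r
  rw [Finset.sum_apply, sum_add_distrib, sum_boole, sum_const, nsmul_one, hQ.natCast_zmod_two]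
  by_cases hr : r = i
  · subst hr
    rw [filter_false_of_mem hi, card_empty, Pi.single_eq_same]; simp
  · obtain ⟨S, hS, hSu⟩ := hcover r hr
    have : ({S ∈ Q | r ∈ S} : Finset _) = {S} :=
      eq_singleton_iff_unique_mem.2 ⟨mem_filter.2 hS, fun S' hS' => hSu S' (mem_filter.1 hS')⟩
    rw [this, card_singleton, Pi.single_eq_of_ne hr]; rfl

section Enumeration

variable {β γ : Type*} [Fintype β] [DecidableEq γ] {U : Finset γ} (e : β ≃ {S // S ∈ U})

theorem Finset.sum_filter_coe_mem {M : Type*} [AddCommMonoid M] {Q : Finset γ} (hQ : Q ⊆ U)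
    (f : γ → M) : ∑ ℓ with (e ℓ : γ) ∈ Q, f (e ℓ) = ∑ S ∈ Q, f S := by
  refine sum_bij (fun ℓ _ => (e ℓ : γ)) (fun ℓ hℓ => (mem_filter.1 hℓ).2)
    (fun ℓ _ ℓ' _ h => e.injective (Subtype.ext h)) (fun S hS => ?_) fun _ _ => rfl
  exact ⟨e.symm ⟨S, hQ hS⟩, by simp [hS], by simp⟩

theorem Finset.card_filter_coe_mem {Q : Finset γ} (hQ : Q ⊆ U) : #{ℓ | (e ℓ : γ) ∈ Q} = #Q := by
  rw [card_eq_sum_ones, card_eq_sum_ones]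
  exact sum_filter_coe_mem e hQ fun _ => 1

end Enumeration

theorem complement_incidence_matrix_structure_general
    (ρ u n N : ℕ) (hρodd : Odd ρ) (hu : 0 < u)
    (hn : n = ρ * u + 1) (hN : N = n.choose u)
    (e : Fin N ≃ {S : Finset (Fin n) // S ∈ Finset.powersetCard u (Finset.univ : Finset (Fin n))})
    (A G : Matrix (Fin n) (Fin N) (ZMod 2))
    (hA : ∀ i ℓ, A i ℓ = if i ∈ (e ℓ : Finset (Fin n)) then 1 else 0)
    (hG : ∀ i ℓ, G i ℓ = 1 + A i ℓ) :
    ∀ i : Fin n,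
      (Finset.univ.filter (fun ℓ => G i ℓ = 1) =
        Finset.univ.filter (fun ℓ => i ∉ (e ℓ : Finset (Fin n)))) ∧
      ((Finset.univ.filter (fun ℓ => G i ℓ = 1)).card = (n - 1).choose u) ∧
      (((Finset.univ.filter (fun ℓ => G i ℓ = 1)).card : ℚ) =
        (1 - (u : ℚ) / (n : ℚ)) * N) ∧
      (∃ T : Fin ((n - 2).choose (u - 1)) → Finset (Fin N),
        (∀ j j', j ≠ j' → Disjoint (T j) (T j')) ∧
        (Finset.univ.biUnion T = Finset.univ.filter (fun ℓ => G i ℓ = 1)) ∧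
        (∀ j, (T j).card = ρ) ∧
        (∀ j, ∑ ℓ ∈ T j, (fun r => G r ℓ) = (Pi.single i 1 : Fin n → ZMod 2))) := by
  intro i
  set X : Finset (Fin n) := univ.erase i
  have hX : #X = ρ * u := by simp [X, hn]
  obtain ⟨P, hPX, hPρ, hPcover, hPuniq⟩ :=
    X.exists_resolution_powersetCard (ι := Fin ((n - 2).choose (u - 1))) hu hX (by simp [hX, hn])
  have hPU : ∀ j, P j ⊆ powersetCard u univ := fun j =>
    (hPX j).trans (powersetCard_mono (subset_univ X))
  have hcol : ∀ ℓ, (fun r => G r ℓ) = fun r => 1 + if r ∈ (e ℓ : Finset (Fin n)) then 1 else 0 :=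
    fun ℓ => funext fun r => by rw [hG, hA]
  have hmemX : ∀ ℓ, (e ℓ : Finset (Fin n)) ∈ X.powersetCard u ↔ i ∉ (e ℓ : Finset (Fin n)) :=
    fun ℓ => by simp [X, mem_powersetCard, subset_erase, (mem_powersetCard.1 (e ℓ).2).2]
  have hTi : univ.filter (fun ℓ => G i ℓ = 1) = univ.filter (fun ℓ => i ∉ (e ℓ : Finset (Fin n))) :=
    filter_congr fun ℓ _ => by rw [congrFun (hcol ℓ) i]; split_ifs <;> simp_all
  have hcard : #(univ.filter fun ℓ => G i ℓ = 1) = (n - 1).choose u := by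
    rw [hTi, ← filter_congr fun ℓ _ => hmemX ℓ,
      card_filter_coe_mem e (powersetCard_mono (subset_univ X)), card_powersetCard, hX, hn,
      Nat.add_sub_cancel]
  refine ⟨hTi, hcard, by rw [hcard, hN]; exact Nat.cast_choose_pred_eq (by omega) u,
    fun j => univ.filter fun ℓ => (e ℓ : Finset (Fin n)) ∈ P j, fun j j' hjj' => ?_, ?_,
    fun j => by rw [card_filter_coe_mem e (hPU j), hPρ], fun j => ?_⟩
  · refine disjoint_filter.2 fun ℓ _ h h' => hjj' ((hPuniq _ (hPX j h)).unique h h')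
  · rw [hTi]
    ext ℓ
    simp only [mem_biUnion, mem_filter, mem_univ, true_and, ← hmemX]
    exact ⟨fun ⟨j, hj⟩ => hPX j hj, fun h => (hPuniq _ h).exists⟩
  · rw [sum_congr rfl fun ℓ _ => hcol ℓ]
    refine (sum_filter_coe_mem e (hPU j) fun S r => (1 + if r ∈ S then 1 else 0 : ZMod 2)).trans
      (sum_one_add_indicator_eq_single (hPρ j ▸ hρodd)
        (fun S hS => (subset_erase.1 (mem_powersetCard.1 (hPX j hS)).1).2) fun r hr => ?_)
    exact hPcover j r (mem_erase.2 ⟨hr, mem_univ r⟩)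

/-- Let `ρ > 1` be an odd integer, `u ≥ 1`, `n = ρu + 1`, `N = C(n,u)`. Let `A` be the
`n × N` matrix over `𝔽₂` whose columns are the characteristic vectors of all
`u`-element subsets of an `n`-element set (enumerated by a bijection `e`), and let
`G` be its coordinatewise complement, `g_{iℓ} = 1 + a_{iℓ}`. Then for every `i`:
the set `Tᵢ = {ℓ : g_{iℓ} = 1}` consists exactly of the columns indexed by
`u`-subsets avoiding `i`, has cardinality `C(n−1,u) = (1 − u/n)·N`, and can be
partitioned into `k = C(n−2, u−1)` pairwise disjoint sets of cardinality `ρ` whose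
column sums over `𝔽₂` each equal the `i`-th unit vector `eᵢ ∈ 𝔽₂ⁿ`. -/
theorem complement_incidence_matrix_structure
    (ρ u n N : ℕ) (hρ : 1 < ρ) (hρodd : Odd ρ) (hu : 0 < u)
    (hn : n = ρ * u + 1) (hN : N = n.choose u)
    (e : Fin N ≃ {S : Finset (Fin n) // S ∈ Finset.powersetCard u (Finset.univ : Finset (Fin n))})
    (A G : Matrix (Fin n) (Fin N) (ZMod 2))
    (hA : ∀ i ℓ, A i ℓ = if i ∈ (e ℓ : Finset (Fin n)) then 1 else 0)
    (hG : ∀ i ℓ, G i ℓ = 1 + A i ℓ) :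
    ∀ i : Fin n,
      (Finset.univ.filter (fun ℓ => G i ℓ = 1) =
        Finset.univ.filter (fun ℓ => i ∉ (e ℓ : Finset (Fin n)))) ∧
      ((Finset.univ.filter (fun ℓ => G i ℓ = 1)).card = (n - 1).choose u) ∧
      (((Finset.univ.filter (fun ℓ => G i ℓ = 1)).card : ℚ) =
        (1 - (u : ℚ) / (n : ℚ)) * N) ∧
      (∃ T : Fin ((n - 2).choose (u - 1)) → Finset (Fin N),
        (∀ j j', j ≠ j' → Disjoint (T j) (T j')) ∧
        (Finset.univ.biUnion T = Finset.univ.filter (fun ℓ => G i ℓ = 1)) ∧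
        (∀ j, (T j).card = ρ) ∧
        (∀ j, ∑ ℓ ∈ T j, (fun r => G r ℓ) = (Pi.single i 1 : Fin n → ZMod 2))) :=
  complement_incidence_matrix_structure_general ρ u n N hρodd hu hn hN e A G hA hG
end

section
/- Let ρ > 1 be an odd integer, u a positive integer, n = ρu + 1, N = C(n,u), λ = 1 − u/n, and k = λN/ρ = C(n−2, u−1). Let G be the n × N matrix over 𝔽₂ whose columns are the coordinatewise complements of the characteristic vectors of all u-subsets of an n-element set, and let C(x) = xG. Fix for each i ∈ [n] a partition of T_i = {ℓ : g_{iℓ} = 1} into classes T_{i1}, …, T_{ik} of size ρ whose column sums over 𝔽₂ each equal e_i. Then for every x ∈ 𝔽₂^n, every i ∈ [n], and every y ∈ 𝔽₂^N with Δ(xG, y) ≤ δN, the number of classes j ∈ [k] satisfying Σ_{ℓ ∈ T_{ij}} y_ℓ = x_i is at least (1 − ρδ/λ)·k. -/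
/-!
On a codeword `xG` every class `T_{ij}` sums to `x ⬝ᵥ eᵢ = xᵢ`, so a class on which `y` decodes
wrongly contains a coordinate where `y` differs from `xG`. The classes are disjoint, hence the
number of wrong classes is at most `Δ(xG, y) ≤ δN`, and `δN = ρδk/λ` because
`λN = C(n-1, u) = C(ρu, u) = ρ·C(ρu-1, u-1) = ρk`.
-/

theorem Nat.choose_mul_self_eq_mul_choose_pred (ρ u : ℕ) (hρ : 0 < ρ) (hu : 0 < u) :
    (ρ * u).choose u = ρ * (ρ * u - 1).choose (u - 1) := by
  have h := Nat.add_one_mul_choose_eq (ρ * u - 1) (u - 1)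
  rw [Nat.sub_add_cancel (Nat.one_le_iff_ne_zero.2 (Nat.mul_pos hρ hu).ne'),
    Nat.sub_add_cancel hu, mul_assoc] at h
  exact Nat.eq_of_mul_eq_mul_right hu (by rw [← h]; ring)

theorem Nat.one_sub_div_mul_choose (n u : ℕ) (hn : 0 < n) :
    (1 - (u : ℝ) / n) * n.choose u = (n - 1).choose u := by
  have h := Nat.choose_mul_succ_eq (n - 1) u
  rw [Nat.sub_add_cancel hn] at h
  rcases le_or_gt u n with hun | hnu
  · have hR : ((n - 1).choose u : ℝ) * n = n.choose u * (n - u) := by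
      rw [← Nat.cast_sub hun]; exact_mod_cast h
    field_simp
    linarith
  · rw [Nat.choose_eq_zero_of_lt hnu, Nat.choose_eq_zero_of_lt (by omega)]
    simp

theorem Matrix.sum_vecMul_of_sum_col_eq_single {m n R : Type*} [Fintype m] [DecidableEq m]
    [CommSemiring R] (G : Matrix m n R) (S : Finset n) (i : m)
    (hS : ∑ ℓ ∈ S, (fun r => G r ℓ) = Pi.single i 1) (x : m → R) :
    ∑ ℓ ∈ S, vecMul x G ℓ = x i := by
  have hcol : ∀ ℓ, vecMul x G ℓ = x ⬝ᵥ fun r => G r ℓ := fun _ => rfl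
  simp_rw [hcol, ← dotProduct_sum, hS, dotProduct_single, mul_one]

theorem card_filter_sum_ne_le_hammingDist {ι α β : Type*} [Fintype ι] [Fintype α]
    [DecidableEq α] [DecidableEq β] [AddCommMonoid β] (T : ι → Finset α)
    (hT : Pairwise (Function.onFun Disjoint T)) (y z : α → β) :
    (Finset.univ.filter fun j => ∑ ℓ ∈ T j, y ℓ ≠ ∑ ℓ ∈ T j, z ℓ).card ≤ hammingDist y z := by
  set bad := Finset.univ.filter fun j => ∑ ℓ ∈ T j, y ℓ ≠ ∑ ℓ ∈ T j, z ℓ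
  have hmeets : ∀ j ∈ bad, ((T j).filter fun ℓ => y ℓ ≠ z ℓ).Nonempty := by
    intro j hj
    by_contra hempty
    rw [Finset.not_nonempty_iff_eq_empty, Finset.filter_eq_empty_iff] at hempty
    exact (Finset.mem_filter.1 hj).2 (Finset.sum_congr rfl fun ℓ hℓ => not_not.1 (hempty hℓ))
  calc bad.card
      ≤ (bad.biUnion fun j => (T j).filter fun ℓ => y ℓ ≠ z ℓ).card :=
        Finset.card_le_card_biUnion
          (fun j _ j' _ hjj' => (hT hjj').mono (Finset.filter_subset _ _) (Finset.filter_subset _ _))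
          hmeets
    _ ≤ (Finset.univ.filter fun ℓ => y ℓ ≠ z ℓ).card :=
        Finset.card_le_card fun ℓ hℓ => by
          obtain ⟨j, -, hℓ⟩ := Finset.mem_biUnion.1 hℓ
          exact Finset.mem_filter.2 ⟨Finset.mem_univ ℓ, (Finset.mem_filter.1 hℓ).2⟩
    _ = hammingDist y z := rfl

theorem combinatorial_code_locally_decodable_general
    (ρ u n N : ℕ) (hρ : 1 < ρ) (hu : 0 < u)
    (hn : n = ρ * u + 1) (hN : N = n.choose u)
    (G : Matrix (Fin n) (Fin N) (ZMod 2))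
    (T : Fin n → Fin ((n - 2).choose (u - 1)) → Finset (Fin N))
    (hdisj : ∀ i j j', j ≠ j' → Disjoint (T i j) (T i j'))
    (hsum : ∀ i j, ∑ ℓ ∈ T i j, (fun r => G r ℓ) = (Pi.single i 1 : Fin n → ZMod 2))
    (δ : ℝ) (x : Fin n → ZMod 2) (i : Fin n) (y : Fin N → ZMod 2)
    (hΔ : (hammingDist (Matrix.vecMul x G) y : ℝ) ≤ δ * N) :
    (1 - (ρ : ℝ) * δ / (1 - (u : ℝ) / (n : ℝ))) * ((n - 2).choose (u - 1) : ℝ) ≤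
      ((Finset.univ.filter
        (fun j : Fin ((n - 2).choose (u - 1)) => ∑ ℓ ∈ T i j, y ℓ = x i)).card : ℝ) := by
  classical
  have hlam : (0 : ℝ) < 1 - (u : ℝ) / n := by
    rw [sub_pos, div_lt_one (by exact_mod_cast (by omega : 0 < n))]
    exact_mod_cast (by nlinarith : u < n)
  have hdensity : (1 - (u : ℝ) / n) * N = ρ * (n - 2).choose (u - 1) := by
    rw [hN, Nat.one_sub_div_mul_choose n u (by omega), show n - 1 = ρ * u by omega,
      Nat.choose_mul_self_eq_mul_choose_pred ρ u (by omega) hu, show ρ * u - 1 = n - 2 by omega]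
    norm_cast
  have hbad : (Finset.univ.filter fun j => ¬∑ ℓ ∈ T i j, y ℓ = x i).card
      ≤ hammingDist (Matrix.vecMul x G) y := by
    have hdecode : ∀ j, ∑ ℓ ∈ T i j, Matrix.vecMul x G ℓ = x i :=
      fun j => Matrix.sum_vecMul_of_sum_col_eq_single G _ i (hsum i j) x
    have h := card_filter_sum_ne_le_hammingDist (T i) (fun j j' h => hdisj i j j' h)
      (Matrix.vecMul x G) y
    simpa only [hdecode, ne_comm] using h
  have hsplit := Finset.card_filter_add_card_filter_not (s := Finset.univ)
    fun j : Fin ((n - 2).choose (u - 1)) => ∑ ℓ ∈ T i j, y ℓ = x i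
  rw [Finset.card_univ, Fintype.card_fin] at hsplit
  have hN' : (N : ℝ) = ρ * (n - 2).choose (u - 1) / (1 - (u : ℝ) / n) := by
    rw [← hdensity, mul_div_cancel_left₀ _ hlam.ne']
  calc (1 - ρ * δ / (1 - (u : ℝ) / n)) * (n - 2).choose (u - 1)
        = (n - 2).choose (u - 1) - δ * N := by rw [hN']; ring
    _ ≤ (n - 2).choose (u - 1) - (Finset.univ.filter fun j => ¬∑ ℓ ∈ T i j, y ℓ = x i).card := by
        gcongr; exact (Nat.cast_le.2 hbad).trans hΔ
    _ = _ := by rw [sub_eq_iff_eq_add]; exact_mod_cast hsplit.symm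

/-- Let `ρ > 1` be odd, `u ≥ 1`, `n = ρu + 1`, `N = C(n,u)`, `λ = 1 − u/n`,
`k = λN/ρ = C(n−2, u−1)`. Let `G` be the `n × N` matrix over `𝔽₂` whose columns are
the coordinatewise complements of the characteristic vectors of all `u`-subsets of
an `n`-element set, with code `C(x) = xG`. Fix for each `i ∈ [n]` a partition of
`Tᵢ = {ℓ : g_{iℓ} = 1}` into classes `T_{i1}, …, T_{ik}` of size `ρ` whose column
sums over `𝔽₂` each equal `eᵢ`. Then for every `x ∈ 𝔽₂ⁿ`, every `i ∈ [n]`, and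
every `y ∈ 𝔽₂^N` with `Δ(xG, y) ≤ δN`, the number of classes `j ∈ [k]` satisfying
`Σ_{ℓ ∈ T_{ij}} y_ℓ = x_i` is at least `(1 − ρδ/λ)·k`. -/
theorem combinatorial_code_locally_decodable
    (ρ u n N : ℕ) (hρ : 1 < ρ) (hρodd : Odd ρ) (hu : 0 < u)
    (hn : n = ρ * u + 1) (hN : N = n.choose u)
    (e : Fin N ≃ {S : Finset (Fin n) // S ∈ Finset.powersetCard u (Finset.univ : Finset (Fin n))})
    (G : Matrix (Fin n) (Fin N) (ZMod 2))
    (hG : ∀ i ℓ, G i ℓ = if i ∈ (e ℓ : Finset (Fin n)) then 0 else 1)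
    (T : Fin n → Fin ((n - 2).choose (u - 1)) → Finset (Fin N))
    (hdisj : ∀ i j j', j ≠ j' → Disjoint (T i j) (T i j'))
    (hcover : ∀ i, Finset.univ.biUnion (T i) = Finset.univ.filter (fun ℓ => G i ℓ = 1))
    (hcard : ∀ i j, (T i j).card = ρ)
    (hsum : ∀ i j, ∑ ℓ ∈ T i j, (fun r => G r ℓ) = (Pi.single i 1 : Fin n → ZMod 2))
    (δ : ℝ) (x : Fin n → ZMod 2) (i : Fin n) (y : Fin N → ZMod 2)
    (hΔ : (hammingDist (Matrix.vecMul x G) y : ℝ) ≤ δ * N) :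
    (1 - (ρ : ℝ) * δ / (1 - (u : ℝ) / (n : ℝ))) * ((n - 2).choose (u - 1) : ℝ) ≤
      ((Finset.univ.filter
        (fun j : Fin ((n - 2).choose (u - 1)) => ∑ ℓ ∈ T i j, y ℓ = x i)).card : ℝ) :=
  combinatorial_code_locally_decodable_general ρ u n N hρ hu hn hN G T hdisj hsum δ x i y hΔ
end
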